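/- arXiv:0909.2811 — 5 statements merged into one kernel-verified Lean document; each statement's English description precedes it below -/
import Mathlib

section
/- If y₁ and y₂ are k-free positive integers and their product y₁·y₂ is a perfect k-th power, then the radical of y₁ equals the radical of y₂, and this common radical equals (y₁·y₂)^{1/k}. -/
/-!
At every prime `p` the valuations `a = v_p(y₁)` and `b = v_p(y₂)` are `< k` and satisfy
`a + b = k · v_p(n)`. Hence `v_p(n) ≤ 1`, and `a = 0 ↔ v_p(n) = 0 ↔ b = 0`: so `n` is squarefree
with the same prime factors as `y₁` and `y₂`, which makes `n` the radical of both.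
-/

/-- The radical of a positive integer: the product of its distinct prime divisors. -/
def radical (n : ℕ) : ℕ := ∏ p ∈ n.primeFactors, p

namespace Nat

theorem eq_zero_iff_of_add_eq_mul {a b k m : ℕ} (hb : b < k) (h : a + b = k * m) :
    a = 0 ↔ m = 0 := by
  constructor
  · rintro rfl
    rcases m with _ | m
    · rfl
    · nlinarith
  · rintro rfl
    omega

theorem le_one_of_add_eq_mul {a b k m : ℕ} (ha : a < k) (hb : b < k) (h : a + b = k * m) :
    m ≤ 1 := by
  by_contra! hm
  nlinarith

theorem factorization_lt_of_forall_not_pow_dvd {k y p : ℕ} (hy : y ≠ 0)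
    (hfree : ∀ q : ℕ, q.Prime → ¬ q ^ k ∣ y) (hp : p.Prime) : y.factorization p < k := by
  by_contra! h
  exact hfree p hp ((hp.pow_dvd_iff_le_factorization hy).mpr h)

theorem factorization_add_eq_mul_of_mul_eq_pow {y₁ y₂ n k : ℕ} (hy₁ : y₁ ≠ 0) (hy₂ : y₂ ≠ 0)
    (hpow : y₁ * y₂ = n ^ k) (p : ℕ) :
    y₁.factorization p + y₂.factorization p = k * n.factorization p := by
  simpa [Nat.factorization_mul hy₁ hy₂, Nat.factorization_pow] using
    congrArg (·.factorization p) hpow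

section KFreeProduct

variable {k y₁ y₂ n : ℕ}

theorem primeFactors_eq_of_mul_eq_pow (hy₁ : y₁ ≠ 0) (hy₂ : y₂ ≠ 0)
    (hfree₂ : ∀ p : ℕ, p.Prime → ¬ p ^ k ∣ y₂) (hpow : y₁ * y₂ = n ^ k) :
    y₁.primeFactors = n.primeFactors := by
  ext p
  simp only [← Nat.support_factorization, Finsupp.mem_support_iff]
  by_cases hp : p.Prime
  · exact not_congr <| eq_zero_iff_of_add_eq_mul
      (factorization_lt_of_forall_not_pow_dvd hy₂ hfree₂ hp)
      (factorization_add_eq_mul_of_mul_eq_pow hy₁ hy₂ hpow p)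
  · simp [Nat.factorization_eq_zero_of_not_prime _ hp]

theorem squarefree_of_mul_eq_pow (hy₁ : y₁ ≠ 0) (hy₂ : y₂ ≠ 0)
    (hfree₁ : ∀ p : ℕ, p.Prime → ¬ p ^ k ∣ y₁) (hfree₂ : ∀ p : ℕ, p.Prime → ¬ p ^ k ∣ y₂)
    (hn : n ≠ 0) (hpow : y₁ * y₂ = n ^ k) : Squarefree n := by
  refine Nat.squarefree_of_factorization_le_one hn fun p => ?_
  by_cases hp : p.Prime
  · exact le_one_of_add_eq_mul (factorization_lt_of_forall_not_pow_dvd hy₁ hfree₁ hp)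
      (factorization_lt_of_forall_not_pow_dvd hy₂ hfree₂ hp)
      (factorization_add_eq_mul_of_mul_eq_pow hy₁ hy₂ hpow p)
  · simp [Nat.factorization_eq_zero_of_not_prime _ hp]

theorem radical_eq_of_mul_eq_pow (hy₁ : y₁ ≠ 0) (hy₂ : y₂ ≠ 0)
    (hfree₁ : ∀ p : ℕ, p.Prime → ¬ p ^ k ∣ y₁) (hfree₂ : ∀ p : ℕ, p.Prime → ¬ p ^ k ∣ y₂)
    (hn : n ≠ 0) (hpow : y₁ * y₂ = n ^ k) : radical y₁ = n := by
  rw [radical, primeFactors_eq_of_mul_eq_pow hy₁ hy₂ hfree₂ hpow,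
    Nat.prod_primeFactors_of_squarefree (squarefree_of_mul_eq_pow hy₁ hy₂ hfree₁ hfree₂ hn hpow)]

end KFreeProduct

end Nat

theorem radical_eq_of_kfree_mul_kth_power_general (k : ℕ) (y₁ y₂ : ℕ)
    (hy₁ : 0 < y₁) (hy₂ : 0 < y₂)
    (hfree₁ : ∀ p : ℕ, p.Prime → ¬ p ^ k ∣ y₁)
    (hfree₂ : ∀ p : ℕ, p.Prime → ¬ p ^ k ∣ y₂)
    (hpow : ∃ n : ℕ, 0 < n ∧ y₁ * y₂ = n ^ k) :
    radical y₁ = radical y₂ ∧ (radical y₁) ^ k = y₁ * y₂ := by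
  obtain ⟨n, hn, hnk⟩ := hpow
  have h₁ : radical y₁ = n :=
    Nat.radical_eq_of_mul_eq_pow hy₁.ne' hy₂.ne' hfree₁ hfree₂ hn.ne' hnk
  have h₂ : radical y₂ = n :=
    Nat.radical_eq_of_mul_eq_pow hy₂.ne' hy₁.ne' hfree₂ hfree₁ hn.ne' (mul_comm y₂ y₁ ▸ hnk)
  exact ⟨h₁.trans h₂.symm, h₁ ▸ hnk.symm⟩

theorem radical_eq_of_kfree_mul_kth_power (k : ℕ) (hk : 2 ≤ k) (y₁ y₂ : ℕ)
    (hy₁ : 0 < y₁) (hy₂ : 0 < y₂)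
    (hfree₁ : ∀ p : ℕ, p.Prime → ¬ p ^ k ∣ y₁)
    (hfree₂ : ∀ p : ℕ, p.Prime → ¬ p ^ k ∣ y₂)
    (hpow : ∃ n : ℕ, 0 < n ∧ y₁ * y₂ = n ^ k) :
    radical y₁ = radical y₂ ∧ (radical y₁) ^ k = y₁ * y₂ :=
  radical_eq_of_kfree_mul_kth_power_general k y₁ y₂ hy₁ hy₂ hfree₁ hfree₂ hpow
end

section
/- The number of pairs (x₁, x₂) of positive integers with x₁, x₂ ≤ H, gcd(x₁, x₂) = 1, and x₁·x₂ a perfect k-th power equals ζ(2)^{-1} H^{2/k} + O(H^{1/k} log H) as H → ∞. -/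
/-!
Coprime numbers whose product is a `k`-th power are themselves `k`-th powers, so the pairs to be
counted are `(a ^ k, b ^ k)` with `(a, b)` coprime in `[1, N]²`, `N = ⌊H ^ (1 / k)⌋`. Möbius
inversion counts those as `∑_{d ≤ N} μ(d) ⌊N / d⌋² = N² ∑_{d ≤ N} μ(d) / d² + O(N log N)`, and
`∑ μ(d) / d² = 1 / ζ(2) = 6 / π²` with a tail of size `O(1 / N)`.
-/

open scoped Classical

open Filter

open Finset ArithmeticFunction
open scoped ArithmeticFunction.Moebius

theorem sum_moebius_divisors (n : ℕ) : ∑ d ∈ n.divisors, μ d = if n = 1 then 1 else 0 := by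
  simpa only [coe_mul_zeta_apply, one_apply] using
    congrArg (fun f : ArithmeticFunction ℤ => f n) moebius_mul_coe_zeta

def coprimePairs (N : ℕ) : Finset (ℕ × ℕ) :=
  {p ∈ Icc 1 N ×ˢ Icc 1 N | p.1.Coprime p.2}

theorem card_filter_dvd_and_dvd (N d : ℕ) :
    #{p ∈ Icc 1 N ×ˢ Icc 1 N | d ∣ p.1 ∧ d ∣ p.2} = (N / d) ^ 2 := by
  rw [filter_product, card_product, show Icc 1 N = Ioc 0 N from Icc_add_one_left_eq_Ioc 0 N,
    Nat.Ioc_filter_dvd_card_eq_div, sq]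

theorem card_coprimePairs (N : ℕ) :
    (#(coprimePairs N) : ℤ) = ∑ d ∈ Icc 1 N, μ d * (N / d : ℕ) ^ 2 := by
  have divisors_gcd : ∀ p ∈ Icc 1 N ×ˢ Icc 1 N,
      {d ∈ Icc 1 N | d ∣ p.1 ∧ d ∣ p.2} = (Nat.gcd p.1 p.2).divisors := by
    rintro ⟨a, b⟩ hp
    simp only [mem_product, mem_Icc] at hp
    ext d
    simp only [mem_filter, mem_Icc, Nat.mem_divisors, Nat.dvd_gcd_iff]
    constructor
    · rintro ⟨-, hd⟩
      exact ⟨hd, Nat.gcd_ne_zero_left (by omega)⟩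
    · rintro ⟨⟨hda, hdb⟩, -⟩
      have := Nat.le_of_dvd (by omega) hda
      exact ⟨⟨Nat.pos_of_dvd_of_pos hda (by omega), by omega⟩, hda, hdb⟩
  calc (#(coprimePairs N) : ℤ)
      = ∑ p ∈ Icc 1 N ×ˢ Icc 1 N, ∑ d ∈ Icc 1 N with d ∣ p.1 ∧ d ∣ p.2, μ d := by
        rw [coprimePairs, card_filter, Nat.cast_sum]
        refine sum_congr rfl fun p hp => ?_
        rw [divisors_gcd p hp, sum_moebius_divisors]
        simp only [Nat.coprime_iff_gcd_eq_one]
        split_ifs <;> rfl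
    _ = ∑ d ∈ Icc 1 N, ∑ p ∈ Icc 1 N ×ˢ Icc 1 N with d ∣ p.1 ∧ d ∣ p.2, μ d :=
        sum_comm' fun p d => by simp only [mem_filter]; tauto
    _ = ∑ d ∈ Icc 1 N, μ d * (N / d : ℕ) ^ 2 := by
        simp only [sum_const, card_filter_dvd_and_dvd, nsmul_eq_mul, Nat.cast_pow, mul_comm]

theorem hasSum_moebius_div_sq :
    HasSum (fun n : ℕ => (μ n : ℝ) / (n : ℝ) ^ 2) (6 / Real.pi ^ 2) := by
  have hs : (1 : ℝ) < (2 : ℂ).re := by norm_num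
  have hL : LSeries (fun n => (μ n : ℂ)) 2 = 6 / (Real.pi : ℂ) ^ 2 := by
    have h := LSeries_zeta_mul_Lseries_moebius hs
    rw [LSeries_zeta_eq_riemannZeta hs, riemannZeta_two] at h
    have hpi : (Real.pi : ℂ) ≠ 0 := Complex.ofReal_ne_zero.mpr Real.pi_ne_zero
    field_simp at h ⊢
    linear_combination h
  have h := (LSeriesSummable_moebius_iff.mpr hs).LSeriesHasSum
  rw [hL] at h
  refine Complex.hasSum_ofReal.mp ?_
  unfold LSeriesHasSum at h
  convert h using 1
  · funext n
    rcases eq_or_ne n 0 with rfl | hn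
    · simp
    · rw [LSeries.term_of_ne_zero hn, show (2 : ℂ) = (2 : ℕ) by norm_num, Complex.cpow_natCast]
      push_cast
      rfl
  · norm_cast

theorem abs_natFloor_sq_sub_sq_le {x : ℝ} (hx : 0 ≤ x) : |(⌊x⌋₊ : ℝ) ^ 2 - x ^ 2| ≤ 2 * x := by
  have h₁ := Nat.floor_le hx
  have h₂ := Nat.lt_floor_add_one x
  rw [abs_sub_comm, abs_of_nonneg (by nlinarith [Nat.cast_nonneg (α := ℝ) ⌊x⌋₊])]
  nlinarith

theorem tsum_inv_sq_nat_add_le {N : ℕ} (hN : N ≠ 0) :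
    ∑' i : ℕ, (((i + (N + 1) : ℕ) : ℝ) ^ 2)⁻¹ ≤ (N : ℝ)⁻¹ := by
  refine Real.tsum_le_of_sum_range_le (fun _ => by positivity) fun n => ?_
  have shift : ∑ i ∈ range n, (((i + (N + 1) : ℕ) : ℝ) ^ 2)⁻¹
      = ∑ i ∈ Ioc N (N + n), ((i : ℝ) ^ 2)⁻¹ := by
    rw [← Ico_add_one_add_one_eq_Ioc, sum_Ico_eq_sum_range, show N + n + 1 - (N + 1) = n by omega]
    simp only [add_comm]
  rw [shift]
  exact (sum_Ioc_inv_sq_le_sub hN (by omega)).trans (sub_le_self _ (by positivity))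

theorem abs_tsum_moebius_div_sq_nat_add_le {N : ℕ} (hN : N ≠ 0) :
    |∑' i : ℕ, (μ (i + (N + 1)) : ℝ) / ((i + (N + 1) : ℕ) : ℝ) ^ 2| ≤ (N : ℝ)⁻¹ := by
  have hs : Summable fun i : ℕ => (((i + (N + 1) : ℕ) : ℝ) ^ 2)⁻¹ :=
    (summable_nat_add_iff (f := fun n : ℕ => ((n : ℝ) ^ 2)⁻¹) (N + 1)).mpr
      (Real.summable_nat_pow_inv.mpr one_lt_two)
  refine (tsum_of_norm_bounded (E := ℝ) hs.hasSum fun i => ?_).trans (tsum_inv_sq_nat_add_le hN)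
  rw [Real.norm_eq_abs, abs_div, abs_of_nonneg (sq_nonneg ((i + (N + 1) : ℕ) : ℝ)), inv_eq_one_div]
  exact div_le_div_of_nonneg_right (mod_cast abs_moebius_le_one) (sq_nonneg _)

theorem abs_sum_moebius_div_sq_sub_le {N : ℕ} (hN : N ≠ 0) :
    |∑ d ∈ Icc 1 N, (μ d : ℝ) / (d : ℝ) ^ 2 - 6 / Real.pi ^ 2| ≤ (N : ℝ)⁻¹ := by
  have hrange : range (N + 1) = insert 0 (Icc 1 N) := by
    ext d; simp only [mem_range, mem_insert, mem_Icc]; omega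
  rw [← hasSum_moebius_div_sq.tsum_eq,
    ← hasSum_moebius_div_sq.summable.sum_add_tsum_nat_add (N + 1), hrange,
    sum_insert (by simp)]
  simpa using abs_tsum_moebius_div_sq_nat_add_le hN

theorem sum_Icc_inv_le_one_add_log (N : ℕ) : ∑ d ∈ Icc 1 N, (d : ℝ)⁻¹ ≤ 1 + Real.log N := by
  simpa [harmonic_eq_sum_Icc] using harmonic_le_one_add_log N

theorem abs_card_coprimePairs_sub_sum_le (N : ℕ) :
    |(#(coprimePairs N) : ℝ) - (∑ d ∈ Icc 1 N, (μ d : ℝ) / (d : ℝ) ^ 2) * N ^ 2|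
      ≤ 2 * N * (1 + Real.log N) := by
  have hcard : (#(coprimePairs N) : ℝ) = ∑ d ∈ Icc 1 N, (μ d : ℝ) * ((N / d : ℕ) : ℝ) ^ 2 := by
    rw [← Int.cast_natCast, card_coprimePairs, Int.cast_sum]
    simp only [Int.cast_mul, Int.cast_pow, Int.cast_natCast]
  rw [hcard, sum_mul, ← sum_sub_distrib]
  calc |∑ d ∈ Icc 1 N, ((μ d : ℝ) * ((N / d : ℕ) : ℝ) ^ 2 - (μ d : ℝ) / (d : ℝ) ^ 2 * N ^ 2)|
      ≤ ∑ d ∈ Icc 1 N, 2 * N * (d : ℝ)⁻¹ := by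
        refine (abs_sum_le_sum_abs _ _).trans (sum_le_sum fun d _ => ?_)
        have hfloor := abs_natFloor_sq_sub_sq_le (x := (N : ℝ) / d) (by positivity)
        rw [Nat.floor_div_eq_div] at hfloor
        calc |(μ d : ℝ) * ((N / d : ℕ) : ℝ) ^ 2 - (μ d : ℝ) / (d : ℝ) ^ 2 * N ^ 2|
            = |(μ d : ℝ)| * |((N / d : ℕ) : ℝ) ^ 2 - ((N : ℝ) / d) ^ 2| := by
              rw [← abs_mul]; ring_nf
          _ ≤ 1 * (2 * ((N : ℝ) / d)) :=
              mul_le_mul (mod_cast abs_moebius_le_one) hfloor (abs_nonneg _) zero_le_one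
          _ = 2 * N * (d : ℝ)⁻¹ := by ring
    _ = 2 * N * ∑ d ∈ Icc 1 N, (d : ℝ)⁻¹ := by rw [mul_sum]
    _ ≤ 2 * N * (1 + Real.log N) := by gcongr; exact sum_Icc_inv_le_one_add_log N

theorem abs_card_coprimePairs_sub_le {N : ℕ} (hN : N ≠ 0) :
    |(#(coprimePairs N) : ℝ) - 6 / Real.pi ^ 2 * N ^ 2| ≤ 2 * N * (1 + Real.log N) + N := by
  set S := ∑ d ∈ Icc 1 N, (μ d : ℝ) / (d : ℝ) ^ 2
  have htail : |S - 6 / Real.pi ^ 2| * (N : ℝ) ^ 2 ≤ N :=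
    calc |S - 6 / Real.pi ^ 2| * (N : ℝ) ^ 2 ≤ (N : ℝ)⁻¹ * (N : ℝ) ^ 2 := by
          gcongr; exact abs_sum_moebius_div_sq_sub_le hN
      _ = (N : ℝ) := by field_simp
  calc |(#(coprimePairs N) : ℝ) - 6 / Real.pi ^ 2 * N ^ 2|
      ≤ |(#(coprimePairs N) : ℝ) - S * N ^ 2| + |S * N ^ 2 - 6 / Real.pi ^ 2 * N ^ 2| :=
        abs_sub_le _ _ _
    _ = |(#(coprimePairs N) : ℝ) - S * N ^ 2| + |S - 6 / Real.pi ^ 2| * (N : ℝ) ^ 2 := by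
        rw [← sub_mul, abs_mul, abs_sq]
    _ ≤ 2 * N * (1 + Real.log N) + N := add_le_add (abs_card_coprimePairs_sub_sum_le N) htail

theorem card_coprimePairs_natFloor_sub_isBigO :
    (fun x : ℝ => (#(coprimePairs ⌊x⌋₊) : ℝ) - 6 / Real.pi ^ 2 * x ^ 2)
      =O[atTop] fun x => x * Real.log x := by
  refine Asymptotics.IsBigO.of_bound 7 ?_
  filter_upwards [eventually_ge_atTop (3 : ℝ)] with x hx
  set N := ⌊x⌋₊
  have hN : 1 ≤ N := Nat.le_floor (by norm_num; linarith)
  have hNx : (N : ℝ) ≤ x := Nat.floor_le (by linarith)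
  have hlogN : Real.log N ≤ Real.log x := Real.log_le_log (by exact_mod_cast hN) hNx
  have hlogx : 1 ≤ Real.log x := by
    rw [Real.le_log_iff_exp_le (by linarith)]
    linarith [Real.exp_one_lt_d9]
  have hc : 6 / Real.pi ^ 2 ≤ 1 := by
    rw [div_le_one (by positivity)]; nlinarith [Real.pi_gt_three]
  have hfloor : |6 / Real.pi ^ 2 * N ^ 2 - 6 / Real.pi ^ 2 * x ^ 2| ≤ 2 * x := by
    rw [← mul_sub, abs_mul, abs_of_pos (by positivity)]
    exact (mul_le_of_le_one_left (abs_nonneg _) hc).trans (abs_natFloor_sq_sub_sq_le (by linarith))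
  have hcount := abs_card_coprimePairs_sub_le (N := N) (by omega)
  rw [Real.norm_eq_abs, Real.norm_eq_abs,
    abs_of_nonneg (mul_nonneg (by linarith : (0 : ℝ) ≤ x) (by linarith))]
  calc |(#(coprimePairs N) : ℝ) - 6 / Real.pi ^ 2 * x ^ 2|
      ≤ (2 * N * (1 + Real.log N) + N) + 2 * x :=
        (abs_sub_le _ _ _).trans (add_le_add hcount hfloor)
    _ ≤ 7 * (x * Real.log x) := by
        nlinarith [mul_le_mul hNx (add_le_add_left hlogN 1) (by positivity) (by linarith)]

theorem pow_le_natFloor_iff_le_natFloor_rpow {H : ℝ} (hH : 0 ≤ H) {k : ℕ} (hk : k ≠ 0) (a : ℕ) :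
    a ^ k ≤ ⌊H⌋₊ ↔ a ≤ ⌊H ^ (1 / (k : ℝ))⌋₊ := by
  rw [Nat.le_floor_iff hH, Nat.le_floor_iff (by positivity), one_div,
    Real.le_rpow_inv_iff_of_pos (Nat.cast_nonneg a) hH (by positivity), Real.rpow_natCast,
    Nat.cast_pow]

theorem filter_coprime_mul_eq_pow_eq_image {k N M : ℕ} (hk : k ≠ 0)
    (hM : ∀ a, a ^ k ≤ N ↔ a ≤ M) :
    {p ∈ Icc 1 N ×ˢ Icc 1 N | p.1.Coprime p.2 ∧ ∃ m, 0 < m ∧ p.1 * p.2 = m ^ k}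
      = (coprimePairs M).image (Prod.map (· ^ k) (· ^ k)) := by
  ext ⟨x, y⟩
  simp only [coprimePairs, mem_filter, mem_product, mem_Icc, mem_image, Prod.exists,
    Prod.map, Prod.mk.injEq]
  constructor
  · rintro ⟨⟨⟨hx, hxN⟩, hy, hyN⟩, hxy, m, -, hm⟩
    obtain ⟨a, rfl⟩ := exists_eq_pow_of_mul_eq_pow (Nat.isUnit_iff.mpr hxy) hm
    obtain ⟨b, rfl⟩ := exists_eq_pow_of_mul_eq_pow (Nat.isUnit_iff.mpr hxy.symm)
      ((mul_comm _ _).trans hm)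
    have ha : a ≠ 0 := by rintro rfl; simp [hk] at hx
    have hb : b ≠ 0 := by rintro rfl; simp [hk] at hy
    refine ⟨a, b, ⟨⟨⟨by omega, (hM a).mp hxN⟩, by omega, (hM b).mp hyN⟩, ?_⟩, rfl, rfl⟩
    exact (Nat.coprime_pow_left_iff (by omega) _ _).mp
      ((Nat.coprime_pow_right_iff (by omega) _ _).mp hxy)
  · rintro ⟨a, b, ⟨⟨⟨ha, haM⟩, hb, hbM⟩, hab⟩, rfl, rfl⟩
    exact ⟨⟨⟨Nat.one_le_pow _ _ ha, (hM a).mpr haM⟩, Nat.one_le_pow _ _ hb, (hM b).mpr hbM⟩,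
      hab.pow k k, a * b, by positivity, (mul_pow a b k).symm⟩

theorem coprime_pairs_kth_power_asymptotic (k : ℕ) (hk : 2 ≤ k) :
    (fun H : ℝ =>
        (((Finset.Icc 1 ⌊H⌋₊ ×ˢ Finset.Icc 1 ⌊H⌋₊).filter
            (fun p : ℕ × ℕ => Nat.Coprime p.1 p.2 ∧
              ∃ m : ℕ, 0 < m ∧ p.1 * p.2 = m ^ k)).card : ℝ)
          - (6 / Real.pi ^ 2) * H ^ (2 / (k : ℝ)))
      =O[atTop] fun H : ℝ => H ^ (1 / (k : ℝ)) * Real.log H := by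
  have hk0 : k ≠ 0 := by omega
  have hroot : Tendsto (fun H : ℝ => H ^ (1 / (k : ℝ))) atTop atTop :=
    tendsto_rpow_atTop (by positivity)
  have hlog : ((fun x : ℝ => x * Real.log x) ∘ fun H : ℝ => H ^ (1 / (k : ℝ)))
      =O[atTop] fun H : ℝ => H ^ (1 / (k : ℝ)) * Real.log H := by
    refine Asymptotics.IsBigO.of_bound (1 / k) ?_
    filter_upwards [eventually_gt_atTop 0] with H hH
    rw [Function.comp_apply, Real.log_rpow hH, mul_left_comm, norm_mul,
      Real.norm_of_nonneg (by positivity)]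
  refine ((card_coprimePairs_natFloor_sub_isBigO.comp_tendsto hroot).trans hlog).congr' ?_
    EventuallyEq.rfl
  filter_upwards [eventually_ge_atTop 0] with H hH
  have hsq : H ^ (2 / (k : ℝ)) = (H ^ (1 / (k : ℝ))) ^ 2 := by
    rw [← Real.rpow_natCast, ← Real.rpow_mul hH]
    congr 1; push_cast; ring
  rw [Function.comp_apply, filter_coprime_mul_eq_pow_eq_image hk0
    (pow_le_natFloor_iff_le_natFloor_rpow hH hk0), card_image_of_injective _
    ((Nat.pow_left_injective hk0).prodMap (Nat.pow_left_injective hk0)), hsq]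
end

section
/- For k ≥ 3 and H ≥ 2, the sum Σ u₁^{k-2} u₂^{k-3} ⋯ u_{k-2} over (k−2)-tuples of positive integers with u₁^{k-1} u₂^{k-2} ⋯ u_{k-2}² < 2H is O(H (log H)^{k-3}). -/
open Filter Finset Asymptotics

/-! Sum first over the last coordinate `m`. For a fixed prefix `v` the summand is `Q m` and the
constraint reads `P m² < 2H`, where `P = Q ∏ vᵢ`; the `m`-sum is at most `Q · 2H / P =
2H ∏ vᵢ⁻¹`. Summing over the box `[1, 2H]^(k-3)` factors into a power of a harmonic number,
giving `2H · (h_⌊2H⌋)^(k-3)`, and `h_⌊2H⌋ ≤ 1 + log (2H) = O(log H)`. -/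

lemma sum_piFinset_eq_sum_sum_snoc {α β : Type*} [AddCommMonoid β] {n : ℕ}
    (s : Fin (n + 1) → Finset α) (g : (Fin (n + 1) → α) → β) :
    ∑ u ∈ Fintype.piFinset s, g u
      = ∑ v ∈ Fintype.piFinset (Fin.init s), ∑ m ∈ s (Fin.last n), g (Fin.snoc v m) := by
  have h := filter_piFinset_eq_map_snocEquiv s (fun _ ↦ True)
  simp only [filter_true] at h
  rw [h, sum_map, sum_product_right]
  rfl

lemma sum_filter_mul_sq_lt_le (M : ℕ) {P X : ℝ} (hP : 0 < P) (hX : 0 ≤ X) :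
    ∑ m ∈ (Icc 1 M).filter (fun m : ℕ ↦ P * (m : ℝ) ^ 2 < X), (m : ℝ) ≤ X / P := by
  set N := ⌊√(X / P)⌋₊
  have hN : (N : ℝ) ^ 2 ≤ X / P := by
    calc (N : ℝ) ^ 2 ≤ √(X / P) ^ 2 := by gcongr; exact Nat.floor_le (Real.sqrt_nonneg _)
      _ = X / P := Real.sq_sqrt (by positivity)
  have hsub : (Icc 1 M).filter (fun m : ℕ ↦ P * (m : ℝ) ^ 2 < X) ⊆ Icc 1 N := by
    intro m hm
    obtain ⟨hmM, hmX⟩ := mem_filter.1 hm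
    refine mem_Icc.2 ⟨(mem_Icc.1 hmM).1, Nat.le_floor (Real.le_sqrt_of_sq_le ?_)⟩
    rw [le_div_iff₀ hP]
    linarith
  calc ∑ m ∈ (Icc 1 M).filter (fun m : ℕ ↦ P * (m : ℝ) ^ 2 < X), (m : ℝ)
      ≤ ∑ m ∈ Icc 1 N, (m : ℝ) := sum_le_sum_of_subset_of_nonneg hsub fun _ _ _ ↦ by positivity
    _ ≤ ∑ _m ∈ Icc 1 N, (N : ℝ) := sum_le_sum fun m hm ↦ by exact_mod_cast (mem_Icc.1 hm).2
    _ = (N : ℝ) ^ 2 := by simp [sq]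
    _ ≤ X / P := hN

lemma prod_pow_div_prod_pow_succ {ι G : Type*} [CommGroupWithZero G] (s : Finset ι) (x : ι → G)
    (e : ι → ℕ) (hx : ∀ i ∈ s, x i ≠ 0) :
    (∏ i ∈ s, x i ^ e i) / ∏ i ∈ s, x i ^ (e i + 1) = ∏ i ∈ s, (x i)⁻¹ := by
  rw [← prod_div_distrib]
  refine prod_congr rfl fun i hi ↦ ?_
  rw [pow_succ, div_mul_cancel_left₀ (pow_ne_zero _ (hx i hi))]

lemma harmonic_nonneg (n : ℕ) : 0 ≤ harmonic n :=
  harmonic_eq_sum_Icc ▸ sum_nonneg fun _ _ ↦ by positivity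

lemma harmonic_floor_const_mul_isBigO_log {c : ℝ} (hc : 0 < c) :
    (fun x : ℝ ↦ (harmonic ⌊c * x⌋₊ : ℝ)) =O[atTop] Real.log := by
  have hlin : (fun x : ℝ ↦ 1 + Real.log c + Real.log x) =O[atTop] Real.log :=
    Real.isLittleO_const_log_atTop.isBigO.add (isBigO_refl _ _)
  refine IsBigO.trans (IsBigO.of_bound' ?_) hlin
  filter_upwards [(tendsto_id.const_mul_atTop hc).eventually_ge_atTop 1] with x hx
  have hx0 : 0 < x := pos_of_mul_pos_right (by simpa using one_pos.trans_le hx) hc.le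
  have hfloor : (0 : ℝ) < ⌊c * x⌋₊ := mod_cast Nat.floor_pos.2 hx
  calc ‖(harmonic ⌊c * x⌋₊ : ℝ)‖ = harmonic ⌊c * x⌋₊ :=
        Real.norm_of_nonneg (mod_cast harmonic_nonneg _)
    _ ≤ 1 + Real.log ⌊c * x⌋₊ := harmonic_le_one_add_log _
    _ ≤ 1 + Real.log (c * x) := by gcongr; exact Nat.floor_le (by positivity)
    _ = 1 + Real.log c + Real.log x := by rw [Real.log_mul hc.ne' hx0.ne']; ring
    _ ≤ ‖1 + Real.log c + Real.log x‖ := Real.le_norm_self _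

lemma sum_filter_prod_pow_lt_le (n M : ℕ) {X : ℝ} (hX : 0 ≤ X) :
    ∑ u ∈ (Fintype.piFinset fun _ : Fin (n + 1) ↦ Icc 1 M).filter
        (fun u ↦ ∏ j : Fin (n + 1), (u j : ℝ) ^ (n + 2 - j.val) < X),
      ∏ j : Fin (n + 1), (u j : ℝ) ^ (n + 1 - j.val) ≤ X * harmonic M ^ n := by
  rw [sum_filter, sum_piFinset_eq_sum_sum_snoc]
  calc _ ≤ ∑ v ∈ Fintype.piFinset (fun _ : Fin n ↦ Icc 1 M), X * ∏ i, (v i : ℝ)⁻¹ := by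
        refine sum_le_sum fun v hv ↦ ?_
        have hv0 : ∀ i ∈ univ, (v i : ℝ) ≠ 0 := fun i _ ↦ by
          have := (mem_Icc.1 (Fintype.mem_piFinset.1 hv i)).1
          positivity
        have hexp : ∀ i : Fin n, n + 2 - i.val = (n + 1 - i.val) + 1 := fun i ↦ by omega
        simp only [Fin.prod_univ_castSucc, Fin.snoc_castSucc, Fin.snoc_last, Fin.val_castSucc,
          Fin.val_last, hexp, Nat.add_sub_cancel_left, pow_one]
        set P := ∏ i : Fin n, (v i : ℝ) ^ (n + 1 - i.val + 1)
        set Q := ∏ i : Fin n, (v i : ℝ) ^ (n + 1 - i.val)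
        have hP : 0 < P := prod_pos fun i hi ↦ pow_pos ((Nat.cast_nonneg _).lt_of_ne' (hv0 i hi)) _
        rw [← sum_filter, ← mul_sum, ← prod_pow_div_prod_pow_succ univ _ _ hv0, mul_div_left_comm]
        exact mul_le_mul_of_nonneg_left (sum_filter_mul_sq_lt_le M hP hX) (by positivity)
    _ = X * harmonic M ^ n := by
        rw [← mul_sum, harmonic_eq_sum_Icc]
        push_cast
        rw [sum_pow']

theorem sum_tuples_bigO (k : ℕ) (hk : 3 ≤ k) :
    (fun H : ℝ =>
        ∑ u ∈ (Fintype.piFinset fun _ : Fin (k - 2) => Finset.Icc 1 ⌊2 * H⌋₊).filter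
            (fun u : Fin (k - 2) → ℕ =>
              ∏ j : Fin (k - 2), ((u j : ℝ)) ^ (k - 1 - j.val) < 2 * H),
          ∏ j : Fin (k - 2), ((u j : ℝ)) ^ (k - 2 - j.val))
      =O[atTop] fun H : ℝ => H * (Real.log H) ^ (k - 3) := by
  obtain ⟨n, rfl⟩ : ∃ n, k = n + 3 := ⟨k - 3, by omega⟩
  refine IsBigO.trans (g := fun H : ℝ ↦ 2 * H * (harmonic ⌊2 * H⌋₊ : ℝ) ^ n) ?_
    ((isBigO_const_mul_self 2 _ _).mul ((harmonic_floor_const_mul_isBigO_log two_pos).pow n))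
  refine IsBigO.of_bound' ?_
  filter_upwards [eventually_ge_atTop 0] with H hH
  rw [Real.norm_of_nonneg (sum_nonneg fun u _ ↦ by positivity),
    Real.norm_of_nonneg (by have := harmonic_nonneg ⌊2 * H⌋₊; positivity)]
  exact sum_filter_prod_pow_lt_le n _ (by positivity)
end

section
/- For k ≥ 2 and complex s, w with Re(s) > 0 and Re(w) > 0, the series Σ_{y k-free} y^{s−w} η(y)^{−ks−1} converges absolutely and equals Π_p (1 + Σ_{j=1}^{k−1} p^{−(k−j)s − jw − 1}). -/
open scoped Classical

/-!
The summand is multiplicative on coprime arguments and vanishes on `p ^ e` for `e ≥ k`, so its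
local factor at `p` is the finite sum `1 + ∑_{1 ≤ j < k} p ^ (-(k - j) s - j w - 1)`. Each of
these `k - 1` terms has modulus at most `p ^ (-1 - Re s)`, hence every partial sum of the absolute
series is bounded by `∏_p (1 + (k - 1) p ^ (-1 - Re s)) ≤ exp ((k - 1) ζ(1 + Re s))`. Absolute
convergence then yields the Euler product.
-/

open Finset

theorem Nat.Prime.pow_dvd_mul_iff_of_coprime {p m n : ℕ} (hp : p.Prime) (h : m.Coprime n)
    (k : ℕ) : p ^ k ∣ m * n ↔ p ^ k ∣ m ∨ p ^ k ∣ n := by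
  refine ⟨fun hd => ?_, fun hd => hd.elim (Dvd.dvd.mul_right · n) (Dvd.dvd.mul_left · m)⟩
  by_cases hpm : p ∣ m
  · have hpn : ¬p ∣ n := fun hpn => hp.one_lt.ne' (Nat.eq_one_of_dvd_coprimes h hpm hpn)
    exact .inl (hp.prime.pow_dvd_of_dvd_mul_right k hpn hd)
  · exact .inr (hp.prime.pow_dvd_of_dvd_mul_left k hpm hd)

theorem radical_mul_of_coprime {m n : ℕ} (hm : m ≠ 0) (hn : n ≠ 0) (h : m.Coprime n) :
    radical (m * n) = radical m * radical n := by
  rw [radical, Nat.primeFactors_mul hm hn, prod_union h.disjoint_primeFactors, radical, radical]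

theorem radical_prime_pow {p e : ℕ} (hp : p.Prime) (he : e ≠ 0) : radical (p ^ e) = p := by
  rw [radical, Nat.primeFactors_pow p he, hp.primeFactors, prod_singleton]

theorem tsum_eq_add_sum_Icc_of_eq_zero {M : Type*} [AddCommMonoid M] [TopologicalSpace M]
    {φ : ℕ → M} {k : ℕ} (hk : k ≠ 0) (hφ : ∀ e, k ≤ e → φ e = 0) :
    ∑' e, φ e = φ 0 + ∑ j ∈ Icc 1 (k - 1), φ j := by
  have hrange : range k = insert 0 (Icc 1 (k - 1)) := by
    ext
    simp only [mem_range, mem_insert, mem_Icc]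
    omega
  rw [tsum_eq_sum (s := range k) (by simpa using hφ), hrange, sum_insert (by simp)]

theorem summable_of_tsum_prime_pow_le_one_add {f g : ℕ → ℝ} (hf : 0 ≤ f) (hf₁ : f 1 = 1)
    (hmul : ∀ {m n}, m.Coprime n → f (m * n) = f m * f n)
    (hsum : ∀ {p}, p.Prime → Summable fun e => f (p ^ e)) (hg : 0 ≤ g) (hgsum : Summable g)
    (hle : ∀ {p}, p.Prime → ∑' e, f (p ^ e) ≤ 1 + g p) :
    Summable f := by
  rw [← summable_nat_add_iff 1]
  refine summable_of_sum_le (c := Real.exp (∑' p, g p)) (fun n => hf (n + 1)) fun u => ?_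
  set N := u.sup id + 2
  have hsmooth : ∀ n ∈ u, n + 1 ∈ N.smoothNumbers := fun n hn =>
    ⟨n.succ_ne_zero, fun p hp => by
      have : n ≤ u.sup id := le_sup (f := id) hn
      have := Nat.le_of_mem_primeFactorsList hp
      omega⟩
  have hP := hasSum_subtype_iff_indicator.mp
    (EulerProduct.summable_and_hasSum_smoothNumbers_prod_primesBelow_tsum hf₁ hmul
      (fun hp => by simpa only [Real.norm_of_nonneg (hf _)] using hsum hp) N).2
  calc ∑ n ∈ u, f (n + 1)
      = ∑ m ∈ u.map (addRightEmbedding 1), N.smoothNumbers.indicator f m := by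
        rw [sum_map]
        exact sum_congr rfl fun n hn => (Set.indicator_of_mem (hsmooth n hn) f).symm
    _ ≤ ∏ p ∈ N.primesBelow, ∑' e, f (p ^ e) :=
        sum_le_hasSum _ (fun m _ => Set.indicator_nonneg (fun m _ => hf m) m) hP
    _ ≤ ∏ p ∈ N.primesBelow, Real.exp (g p) :=
        prod_le_prod (fun p _ => tsum_nonneg fun e => hf _) fun p hp =>
          (hle (Nat.prime_of_mem_primesBelow hp)).trans (by linarith [Real.add_one_le_exp (g p)])
    _ = Real.exp (∑ p ∈ N.primesBelow, g p) := (Real.exp_sum _ _).symm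
    _ ≤ Real.exp (∑' p, g p) := Real.exp_le_exp.mpr (hgsum.sum_le_tsum _ fun p _ => hg p)

noncomputable def kFreeSeriesTerm (k : ℕ) (s w : ℂ) (y : ℕ) : ℂ :=
  if 0 < y ∧ ∀ p : ℕ, p.Prime → ¬ p ^ k ∣ y then
    (y : ℂ) ^ (s - w) * ((radical y : ℕ) : ℂ) ^ (-(k : ℂ) * s - 1)
  else 0

section kFreeSeriesTerm

variable {k : ℕ} {s w : ℂ}

theorem kFreeSeriesTerm_zero : kFreeSeriesTerm k s w 0 = 0 := by simp [kFreeSeriesTerm]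

theorem kFreeSeriesTerm_mul_of_coprime {m n : ℕ} (h : m.Coprime n) :
    kFreeSeriesTerm k s w (m * n) = kFreeSeriesTerm k s w m * kFreeSeriesTerm k s w n := by
  rcases Nat.eq_zero_or_pos m with rfl | hm
  · simp [kFreeSeriesTerm_zero]
  rcases Nat.eq_zero_or_pos n with rfl | hn
  · simp [kFreeSeriesTerm_zero]
  have hfree : (∀ p : ℕ, p.Prime → ¬ p ^ k ∣ m * n) ↔
      (∀ p : ℕ, p.Prime → ¬ p ^ k ∣ m) ∧ ∀ p : ℕ, p.Prime → ¬ p ^ k ∣ n := by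
    simp only [← forall_and]
    exact forall₂_congr fun p hp => by rw [hp.pow_dvd_mul_iff_of_coprime h]; tauto
  by_cases hm' : ∀ p : ℕ, p.Prime → ¬ p ^ k ∣ m
  · by_cases hn' : ∀ p : ℕ, p.Prime → ¬ p ^ k ∣ n
    · simp only [kFreeSeriesTerm, radical_mul_of_coprime hm.ne' hn.ne' h,
        if_pos (⟨Nat.mul_pos hm hn, hfree.mpr ⟨hm', hn'⟩⟩ : _ ∧ _),
        if_pos (⟨hm, hm'⟩ : _ ∧ _), if_pos (⟨hn, hn'⟩ : _ ∧ _)]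
      push_cast
      rw [Complex.natCast_mul_natCast_cpow, Complex.natCast_mul_natCast_cpow]
      ring
    · simp [kFreeSeriesTerm, hfree, hn']
  · simp [kFreeSeriesTerm, hfree, hm']

theorem kFreeSeriesTerm_prime_pow (hk : k ≠ 0) {p : ℕ} (hp : p.Prime) (e : ℕ) :
    kFreeSeriesTerm k s w (p ^ e) =
      if e = 0 then 1 else if e < k then
        (p : ℂ) ^ (-(((k : ℂ) - (e : ℂ)) * s) - (e : ℂ) * w - 1) else 0 := by
  rcases eq_or_ne e 0 with rfl | he
  · simp [kFreeSeriesTerm, radical, hk, Nat.not_prime_one]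
  have hfree : (∀ q : ℕ, q.Prime → ¬ q ^ k ∣ p ^ e) ↔ e < k := by
    refine ⟨fun H => not_le.mp fun hke => H p hp (pow_dvd_pow p hke), fun hek q hq hdvd => ?_⟩
    obtain rfl : q = p := (Nat.prime_dvd_prime_iff_eq hq hp).mp
      (hq.dvd_of_dvd_pow ((dvd_pow_self q hk).trans hdvd))
    exact absurd ((Nat.pow_dvd_pow_iff_le_right hq.one_lt).mp hdvd) (not_le.mpr hek)
  have hp0 : (p : ℂ) ≠ 0 := Nat.cast_ne_zero.mpr hp.ne_zero
  simp only [kFreeSeriesTerm, hfree, pow_pos hp.pos, true_and, if_neg he]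
  split_ifs
  · rw [radical_prime_pow hp he, Nat.cast_pow, ← Complex.natCast_cpow_natCast_mul,
      ← Complex.cpow_add _ _ hp0]
    ring_nf
  · rfl

theorem kFreeSeriesTerm_one (hk : k ≠ 0) : kFreeSeriesTerm k s w 1 = 1 := by
  simpa using kFreeSeriesTerm_prime_pow (s := s) (w := w) hk Nat.prime_two 0

theorem kFreeSeriesTerm_prime_pow_of_le (hk : k ≠ 0) {p e : ℕ} (hp : p.Prime) (he : k ≤ e) :
    kFreeSeriesTerm k s w (p ^ e) = 0 := by
  rw [kFreeSeriesTerm_prime_pow hk hp, if_neg (by omega), if_neg (by omega)]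

theorem kFreeSeriesTerm_prime_pow_of_lt (hk : k ≠ 0) {p j : ℕ} (hp : p.Prime) (hj : 1 ≤ j)
    (hjk : j < k) :
    kFreeSeriesTerm k s w (p ^ j) =
      (p : ℂ) ^ (-(((k : ℂ) - (j : ℂ)) * s) - (j : ℂ) * w - 1) := by
  rw [kFreeSeriesTerm_prime_pow hk hp, if_neg (by omega), if_pos hjk]

theorem tsum_kFreeSeriesTerm_prime_pow (hk : k ≠ 0) {p : ℕ} (hp : p.Prime) :
    ∑' e, kFreeSeriesTerm k s w (p ^ e) =
      1 + ∑ j ∈ Icc 1 (k - 1),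
        (p : ℂ) ^ (-(((k : ℂ) - (j : ℂ)) * s) - (j : ℂ) * w - 1) := by
  rw [tsum_eq_add_sum_Icc_of_eq_zero hk fun e => kFreeSeriesTerm_prime_pow_of_le hk hp,
    pow_zero, kFreeSeriesTerm_one hk]
  refine congrArg _ (sum_congr rfl fun j hj => ?_)
  rw [mem_Icc] at hj
  exact kFreeSeriesTerm_prime_pow_of_lt hk hp hj.1 (by omega)

theorem tsum_norm_kFreeSeriesTerm_prime_pow_le (hk : k ≠ 0) (hs : 0 ≤ s.re) (hw : 0 ≤ w.re)
    {p : ℕ} (hp : p.Prime) :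
    ∑' e, ‖kFreeSeriesTerm k s w (p ^ e)‖ ≤ 1 + (k - 1) * (p : ℝ) ^ (-(1 + s.re)) := by
  rw [tsum_eq_add_sum_Icc_of_eq_zero hk fun e he => by
    rw [kFreeSeriesTerm_prime_pow_of_le hk hp he, norm_zero], pow_zero, kFreeSeriesTerm_one hk,
    norm_one]
  have hterm : ∀ j ∈ Icc 1 (k - 1),
      ‖kFreeSeriesTerm k s w (p ^ j)‖ ≤ (p : ℝ) ^ (-(1 + s.re)) := by
    intro j hj
    rw [mem_Icc] at hj
    rw [kFreeSeriesTerm_prime_pow_of_lt hk hp hj.1 (by omega),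
      Complex.norm_natCast_cpow_of_pos hp.pos]
    refine Real.rpow_le_rpow_of_exponent_le (by exact_mod_cast hp.one_lt.le) ?_
    have hj1 : (1 : ℝ) ≤ j := by exact_mod_cast hj.1
    have hjk : (j : ℝ) + 1 ≤ k := by exact_mod_cast (by omega : j + 1 ≤ k)
    simp only [Complex.sub_re, Complex.neg_re, Complex.mul_re, Complex.natCast_re,
      Complex.sub_im, Complex.natCast_im, Complex.one_re, sub_self, zero_mul, sub_zero]
    nlinarith [mul_nonneg (by linarith : (0 : ℝ) ≤ k - j - 1) hs,
      mul_nonneg (by linarith : (0 : ℝ) ≤ j) hw]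
  have hcard : ((Icc 1 (k - 1)).card : ℝ) = k - 1 := by
    rw [Nat.card_Icc, Nat.add_sub_cancel, Nat.cast_sub (Nat.one_le_iff_ne_zero.mpr hk)]
    simp
  have hsum := sum_le_card_nsmul _ _ _ hterm
  rw [nsmul_eq_mul, hcard] at hsum
  linarith

theorem summable_norm_kFreeSeriesTerm (hk : k ≠ 0) (hs : 0 < s.re) (hw : 0 ≤ w.re) :
    Summable fun y => ‖kFreeSeriesTerm k s w y‖ :=
  summable_of_tsum_prime_pow_le_one_add (fun _ => norm_nonneg _)
    (by rw [kFreeSeriesTerm_one hk, norm_one])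
    (fun h => by simp only [kFreeSeriesTerm_mul_of_coprime h, norm_mul])
    (fun hp => summable_of_ne_finset_zero (s := range k) fun e he => by
      rw [kFreeSeriesTerm_prime_pow_of_le hk hp (not_lt.mp (mem_range.not.mp he)), norm_zero])
    (fun p => mul_nonneg (sub_nonneg.mpr (Nat.one_le_cast.mpr (Nat.one_le_iff_ne_zero.mpr hk)))
      (by positivity))
    ((Real.summable_nat_rpow.mpr (by linarith)).mul_left _)
    (tsum_norm_kFreeSeriesTerm_prime_pow_le hk hs.le hw)

end kFreeSeriesTerm

theorem M_series_euler_product (k : ℕ) (hk : 2 ≤ k) (s w : ℂ)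
    (hs : 0 < s.re) (hw : 0 < w.re) :
    Summable (fun y : ℕ =>
        ‖if 0 < y ∧ ∀ p : ℕ, p.Prime → ¬ p ^ k ∣ y then
            (y : ℂ) ^ (s - w) * ((radical y : ℕ) : ℂ) ^ (-(k : ℂ) * s - 1)
          else 0‖) ∧
    ∃ P : ℂ,
      HasProd (fun p : Nat.Primes =>
        1 + ∑ j ∈ Finset.Icc 1 (k - 1),
          (((p : ℕ) : ℂ)) ^ (-(((k : ℂ) - (j : ℂ)) * s) - (j : ℂ) * w - 1)) P ∧
      HasSum (fun y : ℕ =>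
        if 0 < y ∧ ∀ p : ℕ, p.Prime → ¬ p ^ k ∣ y then
          (y : ℂ) ^ (s - w) * ((radical y : ℕ) : ℂ) ^ (-(k : ℂ) * s - 1)
        else 0) P := by
  have hk₀ : k ≠ 0 := by omega
  have hsum := summable_norm_kFreeSeriesTerm hk₀ hs hw.le
  refine ⟨hsum, _, ?_, hsum.of_norm.hasSum⟩
  have hprod := EulerProduct.eulerProduct_hasProd (kFreeSeriesTerm_one hk₀)
    kFreeSeriesTerm_mul_of_coprime hsum kFreeSeriesTerm_zero
  rwa [funext fun p : Nat.Primes => tsum_kFreeSeriesTerm_prime_pow hk₀ p.2] at hprod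
end

section
/- For k ≥ 2 and H ≥ 2, the number S_k(H) of pairs (x₁,x₂) of positive integers with x₁,x₂ ≤ H and x₁x₂ a perfect k-th power satisfies S_k(H) = H^{2/k} U_k(H) + O(H^{1/k} W_k(H)), where U_k(H) = Σ 1/η(y) and W_k(H) = Σ y^{1/k}/η(y), both sums over k-free y ≤ H with η(y)^k ≤ H·y. -/
open Filter
open scoped Classical

/-!
Every `x ≥ 1` is uniquely `y * a ^ k` with `y` `k`-free, and `x₁ * x₂` is a `k`-th power exactly
when the `k`-free parts are complementary: `y₂ = y₁'`, where `y' = powComplement k y` satisfies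
`y * y' = η(y) ^ k`. Hence
`S_k(H) = ∑ ⌊(H / y) ^ (1/k)⌋ * ⌊(H / y') ^ (1/k)⌋` over the `k`-free `y` with `y, y' ≤ H`,
which is the range `η(y) ^ k ≤ H * y` of `U_k` and `W_k`. As
`(H / y) ^ (1/k) = H ^ (1/k) * y' ^ (1/k) / η(y)`, the product of the two unfloored terms is
`H ^ (2/k) / η(y)`, and dropping the floors costs at most their sum. Finally `y ↦ y'` is an
involution of the range preserving `η`, so both error sums are `H ^ (1/k) * W_k(H)`.
-/

theorem div_rpow_one_div_of_mul_eq_pow {y z r H : ℝ} {k : ℕ} (hk : k ≠ 0) (hy : 0 < y)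
    (hz : 0 < z) (hr : 0 < r) (hH : 0 ≤ H) (h : y * z = r ^ k) :
    (H / y) ^ (1 / (k : ℝ)) = H ^ (1 / (k : ℝ)) * z ^ (1 / (k : ℝ)) / r := by
  have : H / y = H * z / r ^ k := by rw [← h]; field_simp
  rw [this, Real.div_rpow (by positivity) (by positivity), Real.mul_rpow hH hz.le, one_div,
    Real.pow_rpow_inv_natCast hr.le hk]

theorem div_rpow_one_div_mul_of_mul_eq_pow {y z r H : ℝ} {k : ℕ} (hk : k ≠ 0) (hy : 0 < y)
    (hz : 0 < z) (hr : 0 < r) (hH : 0 ≤ H) (h : y * z = r ^ k) :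
    (H / y) ^ (1 / (k : ℝ)) * (H / z) ^ (1 / (k : ℝ)) = H ^ (2 / (k : ℝ)) / r := by
  rw [← Real.mul_rpow (by positivity) (by positivity), div_mul_div_comm, ← sq, h,
    Real.div_rpow (by positivity) (by positivity), one_div, Real.pow_rpow_inv_natCast hr.le hk,
    ← Real.rpow_natCast_mul hH]
  push_cast
  ring_nf

theorem abs_floor_mul_floor_sub_mul_le {a b : ℝ} (ha : 0 ≤ a) (hb : 0 ≤ b) :
    |(⌊a⌋₊ : ℝ) * ⌊b⌋₊ - a * b| ≤ a + b := by
  have ha₁ := Nat.floor_le ha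
  have ha₂ := Nat.lt_floor_add_one a
  have hb₁ := Nat.floor_le hb
  have hb₂ := Nat.lt_floor_add_one b
  have hb₀ : (0 : ℝ) ≤ ⌊b⌋₊ := Nat.cast_nonneg _
  rw [abs_le]
  constructor <;> nlinarith

theorem radical_pos (n : ℕ) : 0 < radical n :=
  Finset.prod_pos fun _ hp => (Nat.prime_of_mem_primeFactors hp).pos

namespace Nat

def mapExponents (f : ℕ → ℕ) (n : ℕ) : ℕ := n.factorization.prod fun p e => p ^ f e

def powFreePart (k n : ℕ) : ℕ := mapExponents (· % k) n

def powRootPart (k n : ℕ) : ℕ := mapExponents (· / k) n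

def powComplement (k n : ℕ) : ℕ := mapExponents (fun e => (k - e) % k) n

variable {f : ℕ → ℕ} {k n y a : ℕ}

theorem mapExponents_pos : 0 < mapExponents f n :=
  Finset.prod_pos fun _ hp => pow_pos (prime_of_mem_primeFactors hp).pos _

theorem factorization_mapExponents (hf : f 0 = 0) :
    (mapExponents f n).factorization = n.factorization.mapRange f hf := by
  rw [mapExponents, ← Finsupp.prod_mapRange_index fun p => pow_zero p]
  exact prod_pow_factorization_eq_self fun p hp =>
    prime_of_mem_primeFactors (Finsupp.support_mapRange hp)

@[simp]
theorem factorization_powFreePart (p : ℕ) :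
    (powFreePart k n).factorization p = n.factorization p % k := by
  rw [powFreePart, factorization_mapExponents (Nat.zero_mod k), Finsupp.mapRange_apply]

@[simp]
theorem factorization_powRootPart (p : ℕ) :
    (powRootPart k n).factorization p = n.factorization p / k := by
  rw [powRootPart, factorization_mapExponents (Nat.zero_div k), Finsupp.mapRange_apply]

@[simp]
theorem factorization_powComplement (p : ℕ) :
    (powComplement k n).factorization p = (k - n.factorization p) % k := by
  rw [powComplement, factorization_mapExponents (by simp), Finsupp.mapRange_apply]

theorem sub_mod_of_lt {e k : ℕ} (he : e < k) : (k - e) % k = if e = 0 then 0 else k - e := by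
  split_ifs with h
  · simp [h]
  · exact Nat.mod_eq_of_lt (by omega)

theorem mod_eq_sub_mod_of_dvd_add {a b k : ℕ} (hk : 0 < k) (h : k ∣ a + b) :
    b % k = (k - a % k) % k := by
  refine Nat.ModEq.add_right_cancel' (a % k) ?_
  rw [Nat.sub_add_cancel (Nat.mod_lt a hk).le]
  calc b + a % k ≡ b + a [MOD k] := (Nat.mod_modEq a k).add_left b
    _ ≡ 0 [MOD k] := by rw [add_comm]; exact (Nat.modEq_zero_iff_dvd).2 h
    _ ≡ k [MOD k] := (Nat.modEq_zero_iff_dvd.2 dvd_rfl).symm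

theorem powFreePart_pos (k n : ℕ) : 0 < powFreePart k n := mapExponents_pos

theorem powRootPart_pos (k n : ℕ) : 0 < powRootPart k n := mapExponents_pos

theorem powComplement_pos (k n : ℕ) : 0 < powComplement k n := mapExponents_pos

theorem powFreePart_mul_powRootPart_pow (hn : n ≠ 0) :
    powFreePart k n * powRootPart k n ^ k = n := by
  refine eq_of_factorization_eq
    (mul_ne_zero (powFreePart_pos k n).ne' (pow_ne_zero _ (powRootPart_pos k n).ne')) hn
    fun p => ?_
  simp [factorization_mul (powFreePart_pos k n).ne' (pow_ne_zero _ (powRootPart_pos k n).ne'),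
    Nat.mod_add_div]

theorem powFreePart_dvd (hn : n ≠ 0) : powFreePart k n ∣ n :=
  Dvd.intro _ (powFreePart_mul_powRootPart_pow hn)

theorem factorization_powFreePart_lt (hk : 0 < k) (p : ℕ) :
    (powFreePart k n).factorization p < k := by
  simpa using Nat.mod_lt _ hk

theorem powFreePart_mul_pow (hy : y ≠ 0) (hfree : ∀ p, y.factorization p < k) (ha : a ≠ 0) :
    powFreePart k (y * a ^ k) = y := by
  refine eq_of_factorization_eq (powFreePart_pos _ _).ne' hy fun p => ?_
  simp [factorization_mul hy (pow_ne_zero k ha), Nat.mod_eq_of_lt (hfree p)]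

theorem powRootPart_mul_pow (hy : y ≠ 0) (hfree : ∀ p, y.factorization p < k) (ha : a ≠ 0) :
    powRootPart k (y * a ^ k) = a := by
  refine eq_of_factorization_eq (powRootPart_pos _ _).ne' ha fun p => ?_
  have hk : 0 < k := (Nat.zero_le _).trans_lt (hfree p)
  simp [factorization_mul hy (pow_ne_zero k ha), Nat.add_mul_div_left _ _ hk,
    Nat.div_eq_of_lt (hfree p)]

theorem powComplement_powComplement (hy : y ≠ 0) (hfree : ∀ p, y.factorization p < k) :
    powComplement k (powComplement k y) = y := by
  refine eq_of_factorization_eq (powComplement_pos _ _).ne' hy fun p => ?_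
  have hp := hfree p
  simp only [factorization_powComplement, sub_mod_of_lt hp]
  split_ifs with h
  · simp [h]
  · rw [Nat.sub_sub_self hp.le, Nat.mod_eq_of_lt hp]

theorem primeFactors_powComplement (hfree : ∀ p, y.factorization p < k) :
    (powComplement k y).primeFactors = y.primeFactors := by
  ext p
  simp only [← support_factorization, Finsupp.mem_support_iff, factorization_powComplement,
    sub_mod_of_lt (hfree p)]
  have := hfree p
  split_ifs <;> omega

theorem mul_powComplement (hy : y ≠ 0) (hfree : ∀ p, y.factorization p < k) :
    y * powComplement k y = radical y ^ k := by
  rw [powComplement, mapExponents, radical, ← Finset.prod_pow]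
  nth_rewrite 1 [← prod_factorization_pow_eq_self hy]
  rw [← Finsupp.prod_mul]
  refine Finset.prod_congr rfl fun p hp => ?_
  have hp0 : y.factorization p ≠ 0 := Finsupp.mem_support_iff.1 (support_factorization y ▸ hp)
  have := hfree p
  simp only [← pow_add, sub_mod_of_lt (hfree p), if_neg hp0]
  congr 1
  omega

theorem factorization_powComplement_lt (hk : 0 < k) (p : ℕ) :
    (powComplement k n).factorization p < k := by
  simpa using Nat.mod_lt _ hk

theorem powFreePart_eq_powComplement {x₁ x₂ m : ℕ} (hk : 0 < k) (h₁ : x₁ ≠ 0) (h₂ : x₂ ≠ 0)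
    (h : x₁ * x₂ = m ^ k) : powFreePart k x₂ = powComplement k (powFreePart k x₁) := by
  refine eq_of_factorization_eq (powFreePart_pos _ _).ne' (powComplement_pos _ _).ne' fun p => ?_
  have hdvd : k ∣ x₁.factorization p + x₂.factorization p := by
    rw [← Finsupp.add_apply, ← factorization_mul h₁ h₂, h, factorization_pow]
    exact Dvd.intro _ rfl
  simpa using mod_eq_sub_mod_of_dvd_add hk hdvd

theorem mem_filter_mul_pow_le (hk : k ≠ 0) (hy : 0 < y) (N : ℕ) :
    a ∈ (Finset.Icc 1 N).filter (fun a => y * a ^ k ≤ N) ↔ 0 < a ∧ y * a ^ k ≤ N := by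
  simp only [Finset.mem_filter, Finset.mem_Icc]
  constructor
  · rintro ⟨⟨ha, -⟩, h⟩
    exact ⟨ha, h⟩
  · rintro ⟨ha, h⟩
    exact ⟨⟨ha, ((Nat.le_self_pow hk a).trans (Nat.le_mul_of_pos_left _ hy)).trans h⟩, h⟩

/-- `x ↦ (powFreePart k x, powRootPart k x)` matches the pairs `(x₁, x₂)` with `x₁ * x₂` a
`k`-th power with the triples `(y, a, b)`, `x₁ = y * a ^ k`, `x₂ = powComplement k y * b ^ k`. -/
theorem card_filter_mul_eq_pow (hk : 0 < k) (N : ℕ) :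
    ((Finset.Icc 1 N ×ˢ Finset.Icc 1 N).filter
        (fun x : ℕ × ℕ => ∃ m : ℕ, 0 < m ∧ x.1 * x.2 = m ^ k)).card =
      ∑ y ∈ (Finset.Icc 1 N).filter
          (fun y => (∀ p, y.factorization p < k) ∧ powComplement k y ≤ N),
        ((Finset.Icc 1 N).filter (fun a => y * a ^ k ≤ N)).card *
          ((Finset.Icc 1 N).filter (fun b => powComplement k y * b ^ k ≤ N)).card := by
  have hS : ∀ x ∈ (Finset.Icc 1 N ×ˢ Finset.Icc 1 N).filter
      (fun x : ℕ × ℕ => ∃ m : ℕ, 0 < m ∧ x.1 * x.2 = m ^ k),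
      x.1 ≠ 0 ∧ x.1 ≤ N ∧ x.2 ≠ 0 ∧ x.2 ≤ N ∧
        powFreePart k x.2 = powComplement k (powFreePart k x.1) := by
    simp only [Finset.mem_filter, Finset.mem_product, Finset.mem_Icc]
    rintro ⟨x₁, x₂⟩ ⟨⟨⟨h₁, hN₁⟩, h₂, hN₂⟩, m, -, hm⟩
    exact ⟨by omega, hN₁, by omega, hN₂,
      powFreePart_eq_powComplement hk (by omega) (by omega) hm⟩
  simp_rw [← Finset.card_product]
  rw [← Finset.card_sigma]
  refine Finset.card_nbij'
    (fun x => ⟨powFreePart k x.1, (powRootPart k x.1, powRootPart k x.2)⟩)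
    (fun t => (t.1 * t.2.1 ^ k, powComplement k t.1 * t.2.2 ^ k)) ?_ ?_ ?_ ?_
  · rintro ⟨x₁, x₂⟩ hx
    obtain ⟨h₁, hN₁, h₂, hN₂, hx₂⟩ := hS _ hx
    have hy := powFreePart_pos k x₁
    simp only [Finset.mem_coe, Finset.mem_sigma, Finset.mem_product,
      mem_filter_mul_pow_le hk.ne' hy, mem_filter_mul_pow_le hk.ne' (powFreePart_pos k x₂),
      Finset.mem_filter, Finset.mem_Icc, ← hx₂, powFreePart_mul_powRootPart_pow h₁,
      powFreePart_mul_powRootPart_pow h₂]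
    exact ⟨⟨⟨hy, (Nat.le_of_dvd (by omega) (powFreePart_dvd h₁)).trans hN₁⟩,
      factorization_powFreePart_lt hk,
      (Nat.le_of_dvd (by omega) (powFreePart_dvd h₂)).trans hN₂⟩,
      ⟨powRootPart_pos k x₁, hN₁⟩, powRootPart_pos k x₂, hN₂⟩
  · rintro ⟨y, a, b⟩ ht
    simp only [Finset.mem_coe, Finset.mem_sigma, Finset.mem_product, Finset.mem_filter,
      Finset.mem_Icc] at ht ⊢
    obtain ⟨⟨⟨hy : 0 < y, -⟩, hfree, -⟩, ⟨⟨ha : 0 < a, -⟩, haN⟩, ⟨hb : 0 < b, -⟩, hbN⟩ := ht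
    refine ⟨⟨⟨Nat.mul_pos hy (pow_pos ha k), haN⟩,
      Nat.mul_pos (powComplement_pos k y) (pow_pos hb k), hbN⟩, radical y * (a * b),
      mul_pos (_root_.radical_pos y) (mul_pos ha hb), ?_⟩
    rw [mul_mul_mul_comm, mul_powComplement hy.ne' hfree, ← mul_pow, ← mul_pow]
  · rintro ⟨x₁, x₂⟩ hx
    obtain ⟨h₁, -, h₂, -, hx₂⟩ := hS _ hx
    simp only [← hx₂, powFreePart_mul_powRootPart_pow h₁, powFreePart_mul_powRootPart_pow h₂]
  · rintro ⟨y, a, b⟩ ht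
    simp only [Finset.mem_coe, Finset.mem_sigma, Finset.mem_product, Finset.mem_filter,
      Finset.mem_Icc] at ht
    obtain ⟨⟨⟨hy : 0 < y, -⟩, hfree, -⟩, ⟨⟨ha : 0 < a, -⟩, -⟩, ⟨hb : 0 < b, -⟩, -⟩ := ht
    simp only [powFreePart_mul_pow hy.ne' hfree ha.ne', powRootPart_mul_pow hy.ne' hfree ha.ne',
      powRootPart_mul_pow (powComplement_pos k y).ne' (factorization_powComplement_lt hk)
        hb.ne']

theorem forall_prime_not_pow_dvd_iff (hk : 0 < k) (hn : n ≠ 0) :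
    (∀ p : ℕ, p.Prime → ¬ p ^ k ∣ n) ↔ ∀ p, n.factorization p < k := by
  refine forall_congr' fun p => ?_
  by_cases hp : p.Prime
  · simp [hp, hp.pow_dvd_iff_le_factorization hn]
  · simp [hp, factorization_eq_zero_of_not_prime n hp, hk]

theorem card_filter_mul_pow_le_floor (hk : k ≠ 0) (hy : 0 < y) {H : ℝ} (hH : 0 ≤ H) :
    ((Finset.Icc 1 ⌊H⌋₊).filter (fun a => y * a ^ k ≤ ⌊H⌋₊)).card =
      ⌊(H / y) ^ (1 / (k : ℝ))⌋₊ := by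
  suffices (Finset.Icc 1 ⌊H⌋₊).filter (fun a => y * a ^ k ≤ ⌊H⌋₊) =
      Finset.Icc 1 ⌊(H / y) ^ (1 / (k : ℝ))⌋₊ by
    rw [this, Nat.card_Icc, Nat.add_sub_cancel]
  ext a
  have hyR : (0 : ℝ) < y := by exact_mod_cast hy
  rw [mem_filter_mul_pow_le hk hy, Finset.mem_Icc, Nat.one_le_iff_ne_zero,
    ← Nat.pos_iff_ne_zero, Nat.le_floor_iff (Real.rpow_nonneg (div_nonneg hH hyR.le) _), one_div,
    Real.le_rpow_inv_iff_of_pos (Nat.cast_nonneg a) (div_nonneg hH hyR.le) (by positivity),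
    Real.rpow_natCast, le_div_iff₀ hyR, Nat.le_floor_iff hH, mul_comm]
  push_cast
  rfl

section Admissible

variable {H : ℝ}

theorem radical_powComplement (hfree : ∀ p, y.factorization p < k) :
    radical (powComplement k y) = radical y := by
  rw [radical, radical, primeFactors_powComplement hfree]

-- The summation range of `U_k(H)` and `W_k(H)`.
noncomputable def admissible (k : ℕ) (H : ℝ) : Finset ℕ :=
  (Finset.Icc 1 ⌊H⌋₊).filter
    (fun y : ℕ => (∀ p : ℕ, p.Prime → ¬ p ^ k ∣ y) ∧ ((radical y : ℝ)) ^ k ≤ H * y)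

theorem admissible_eq (hk : 0 < k) (hH : 0 ≤ H) :
    admissible k H = (Finset.Icc 1 ⌊H⌋₊).filter
      (fun y => (∀ p, y.factorization p < k) ∧ powComplement k y ≤ ⌊H⌋₊) := by
  refine Finset.filter_congr fun y hy => ?_
  have hy0 : y ≠ 0 := by simp only [Finset.mem_Icc] at hy; omega
  rw [forall_prime_not_pow_dvd_iff hk hy0]
  refine and_congr_right fun hfree => ?_
  have hyR : (0 : ℝ) < y := by positivity
  rw [← Nat.cast_pow, ← mul_powComplement hy0 hfree, Nat.cast_mul, mul_comm H,
    mul_le_mul_iff_of_pos_left hyR, Nat.le_floor_iff hH]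

theorem sum_admissible_powComplement {M : Type*} [AddCommMonoid M] (hk : 0 < k) (hH : 0 ≤ H)
    (f : ℕ → M) :
    ∑ y ∈ admissible k H, f (powComplement k y) = ∑ y ∈ admissible k H, f y := by
  have hmem : ∀ y ∈ admissible k H, powComplement k y ∈ admissible k H := by
    simp only [admissible_eq hk hH, Finset.mem_filter, Finset.mem_Icc]
    rintro y ⟨⟨hy, hyN⟩, hfree, hcN⟩
    exact ⟨⟨powComplement_pos k y, hcN⟩, factorization_powComplement_lt hk,
      by rwa [powComplement_powComplement (by omega) hfree]⟩
  have hinv : ∀ y ∈ admissible k H, powComplement k (powComplement k y) = y := by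
    simp only [admissible_eq hk hH, Finset.mem_filter, Finset.mem_Icc]
    rintro y ⟨⟨hy, -⟩, hfree, -⟩
    exact powComplement_powComplement (by omega) hfree
  exact Finset.sum_nbij' _ _ hmem hmem hinv hinv fun _ _ => rfl

theorem abs_floor_mul_floor_sub_le (hk : 0 < k) (hH : 0 ≤ H) (hy : 0 < y)
    (hfree : ∀ p, y.factorization p < k) :
    |(⌊(H / y) ^ (1 / (k : ℝ))⌋₊ : ℝ) * ⌊(H / powComplement k y) ^ (1 / (k : ℝ))⌋₊
        - H ^ (2 / (k : ℝ)) * (1 / radical y)|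
      ≤ H ^ (1 / (k : ℝ)) *
            ((powComplement k y : ℝ) ^ (1 / (k : ℝ)) / radical (powComplement k y))
        + H ^ (1 / (k : ℝ)) * ((y : ℝ) ^ (1 / (k : ℝ)) / radical y) := by
  have hmul : (y : ℝ) * powComplement k y = (radical y : ℝ) ^ k := by
    exact_mod_cast mul_powComplement hy.ne' hfree
  have hyR : (0 : ℝ) < y := by exact_mod_cast hy
  have hcR : (0 : ℝ) < powComplement k y := by exact_mod_cast powComplement_pos k y
  have hrR : (0 : ℝ) < radical y := by exact_mod_cast _root_.radical_pos y
  rw [radical_powComplement hfree, mul_one_div, mul_div_assoc', mul_div_assoc',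
    ← div_rpow_one_div_mul_of_mul_eq_pow hk.ne' hyR hcR hrR hH hmul,
    ← div_rpow_one_div_of_mul_eq_pow hk.ne' hyR hcR hrR hH hmul,
    ← div_rpow_one_div_of_mul_eq_pow hk.ne' hcR hyR hrR hH (by rw [mul_comm, hmul])]
  exact abs_floor_mul_floor_sub_mul_le (by positivity) (by positivity)

theorem card_filter_mul_eq_pow_eq_sum_floor (hk : 0 < k) (hH : 0 ≤ H) :
    ((Finset.Icc 1 ⌊H⌋₊ ×ˢ Finset.Icc 1 ⌊H⌋₊).filter
        (fun x : ℕ × ℕ => ∃ m : ℕ, 0 < m ∧ x.1 * x.2 = m ^ k)).card =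
      ∑ y ∈ admissible k H,
        ⌊(H / y) ^ (1 / (k : ℝ))⌋₊ * ⌊(H / powComplement k y) ^ (1 / (k : ℝ))⌋₊ := by
  rw [card_filter_mul_eq_pow hk, ← admissible_eq hk hH]
  refine Finset.sum_congr rfl fun y hy => ?_
  have hy0 : 0 < y := by
    simp only [admissible, Finset.mem_filter, Finset.mem_Icc] at hy
    omega
  rw [card_filter_mul_pow_le_floor hk.ne' hy0 hH,
    card_filter_mul_pow_le_floor hk.ne' (powComplement_pos k y) hH]

theorem abs_card_filter_mul_eq_pow_sub_le (hk : 0 < k) (hH : 0 ≤ H) :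
    |(((Finset.Icc 1 ⌊H⌋₊ ×ˢ Finset.Icc 1 ⌊H⌋₊).filter
        (fun x : ℕ × ℕ => ∃ m : ℕ, 0 < m ∧ x.1 * x.2 = m ^ k)).card : ℝ)
      - H ^ (2 / (k : ℝ)) * ∑ y ∈ admissible k H, 1 / (radical y : ℝ)|
      ≤ 2 * (H ^ (1 / (k : ℝ)) *
          ∑ y ∈ admissible k H, (y : ℝ) ^ (1 / (k : ℝ)) / radical y) := by
  set f : ℕ → ℝ := fun z => H ^ (1 / (k : ℝ)) * ((z : ℝ) ^ (1 / (k : ℝ)) / radical z)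
  rw [card_filter_mul_eq_pow_eq_sum_floor hk hH, Finset.mul_sum, Nat.cast_sum,
    ← Finset.sum_sub_distrib]
  calc _ ≤ ∑ y ∈ admissible k H, |(⌊(H / y) ^ (1 / (k : ℝ))⌋₊ *
          ⌊(H / powComplement k y) ^ (1 / (k : ℝ))⌋₊ : ℕ)
          - H ^ (2 / (k : ℝ)) * (1 / radical y)| :=
        Finset.abs_sum_le_sum_abs _ _
    _ ≤ ∑ y ∈ admissible k H, (f (powComplement k y) + f y) := by
        refine Finset.sum_le_sum fun y hy => ?_
        simp only [admissible_eq hk hH, Finset.mem_filter, Finset.mem_Icc] at hy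
        push_cast
        exact abs_floor_mul_floor_sub_le hk hH hy.1.1 hy.2.1
    _ = 2 * ∑ y ∈ admissible k H, f y := by
        rw [Finset.sum_add_distrib, sum_admissible_powComplement hk hH f, two_mul]
    _ = _ := by rw [Finset.mul_sum _ _ (H ^ (1 / (k : ℝ)))]

end Admissible

end Nat

theorem Sk_eq_main_plus_error (k : ℕ) (hk : 2 ≤ k) :
    (fun H : ℝ =>
        (((Finset.Icc 1 ⌊H⌋₊ ×ˢ Finset.Icc 1 ⌊H⌋₊).filter
            (fun p : ℕ × ℕ => ∃ m : ℕ, 0 < m ∧ p.1 * p.2 = m ^ k)).card : ℝ)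
          - H ^ (2 / (k : ℝ)) *
            ∑ y ∈ (Finset.Icc 1 ⌊H⌋₊).filter
                (fun y : ℕ => (∀ p : ℕ, p.Prime → ¬ p ^ k ∣ y) ∧
                  ((radical y : ℝ)) ^ k ≤ H * y),
              (1 : ℝ) / (radical y))
      =O[atTop] fun H : ℝ =>
        H ^ (1 / (k : ℝ)) *
          ∑ y ∈ (Finset.Icc 1 ⌊H⌋₊).filter
              (fun y : ℕ => (∀ p : ℕ, p.Prime → ¬ p ^ k ∣ y) ∧
                ((radical y : ℝ)) ^ k ≤ H * y),
            (y : ℝ) ^ (1 / (k : ℝ)) / (radical y) := by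
  refine Asymptotics.IsBigO.of_bound 2 ?_
  filter_upwards [eventually_ge_atTop 0] with H hH
  rw [Real.norm_eq_abs, Real.norm_of_nonneg (by positivity)]
  exact Nat.abs_card_filter_mul_eq_pow_sub_le (by omega) hH
end
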